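/- arXiv:1411.5922 — 2 statements merged into one kernel-verified Lean document; each statement's English description precedes it below -/
import Mathlib

section
/- Let T₁ be a closed linear relation from a Hilbert space ℌ to a Hilbert space 𝔎₁ and let T₂ be a closed linear relation from ℌ to a Hilbert space 𝔎₂. Then T₁*T₁ ≤ T₂*T₂ if and only if dom T₂ ⊆ dom T₁ and ‖(T₁)ₛ h‖ ≤ ‖(T₂)ₛ h‖ for all h ∈ dom T₂. -/
/-!
By von Neumann's theorem, a closed relation `S` has bounded everywhere defined operators
`C = (1 + S*S)⁻¹` and `B = S C`, determined by `(C h, B h) ∈ S` and `(B h, h - C h) ∈ S*`;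
then `S*S = {(C h, h - C h)}` and `‖B h‖² = ⟨C h, h - C h⟩`. So if `S₁*S₁ = S₂*S₂`, both
relations have the same `C` and `‖B₁ h‖ = ‖B₂ h‖`. Since `{(C h, Bᵢ h)}` is dense in the graph
of `(Sᵢ)ₛ`, passing to limits gives `dom S₁ = dom S₂` and `‖(S₁)ₛ h‖ = ‖(S₂)ₛ h‖`. The square
root of `S*S` is `{(√C u, √(1 - C) u)}`; being selfadjoint, it is closed and its adjoint times
itself is again `S*S`. Thus in the definition of `T₁*T₁ ≤ T₂*T₂` the square roots may be
replaced by `T₁` and `T₂`.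
-/

open scoped ComplexOrder

set_option synthInstance.maxHeartbeats 1000000
set_option maxHeartbeats 1000000

noncomputable section

variable {E F G : Type*}

section Basic
variable [AddCommGroup E] [Module ℂ E] [AddCommGroup F] [Module ℂ F]
  [AddCommGroup G] [Module ℂ G]

/-- The domain of a linear relation. -/
def relDom (R : Submodule ℂ (E × F)) : Set E := Prod.fst '' (R : Set (E × F))

/-- The range of a linear relation. -/
def relRan (R : Submodule ℂ (E × F)) : Set F := Prod.snd '' (R : Set (E × F))

/-- The kernel of a linear relation. -/
def relKer (R : Submodule ℂ (E × F)) : Submodule ℂ E where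
  carrier := {f | (f, (0 : F)) ∈ R}
  add_mem' := fun ha hb => by simpa using R.add_mem ha hb
  zero_mem' := R.zero_mem
  smul_mem' := fun c _ ha => by simpa using R.smul_mem c ha

/-- The multivalued part of a linear relation. -/
def relMul (R : Submodule ℂ (E × F)) : Submodule ℂ F where
  carrier := {g | ((0 : E), g) ∈ R}
  add_mem' := fun ha hb => by simpa using R.add_mem ha hb
  zero_mem' := R.zero_mem
  smul_mem' := fun c _ ha => by simpa using R.smul_mem c ha

/-- The product (composition) `S R` of two linear relations. -/
def relComp (S : Submodule ℂ (F × G)) (R : Submodule ℂ (E × F)) :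
    Submodule ℂ (E × G) where
  carrier := {p | ∃ φ : F, (p.1, φ) ∈ R ∧ (φ, p.2) ∈ S}
  add_mem' := by
    rintro p q ⟨φ, h1, h2⟩ ⟨ψ, h3, h4⟩
    exact ⟨φ + ψ, by simpa using R.add_mem h1 h3, by simpa using S.add_mem h2 h4⟩
  zero_mem' := ⟨0, R.zero_mem, S.zero_mem⟩
  smul_mem' := by
    rintro c p ⟨φ, h1, h2⟩
    exact ⟨c • φ, by simpa using R.smul_mem c h1, by simpa using S.smul_mem c h2⟩

/-- The inverse of a linear relation. -/
def relInv (R : Submodule ℂ (E × F)) : Submodule ℂ (F × E) where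
  carrier := {p | (p.2, p.1) ∈ R}
  add_mem' := fun ha hb => by simpa using R.add_mem ha hb
  zero_mem' := R.zero_mem
  smul_mem' := fun c _ ha => by simpa using R.smul_mem c ha

/-- The scalar multiple `c H = {{f, c f'} : {f, f'} ∈ H}` of a linear relation. -/
def relSmul (c : ℝ) (R : Submodule ℂ (E × F)) : Submodule ℂ (E × F) where
  carrier := {p | ∃ f', (p.1, f') ∈ R ∧ p.2 = (c : ℂ) • f'}
  add_mem' := by
    rintro p q ⟨f, h1, h2⟩ ⟨g, h3, h4⟩
    refine ⟨f + g, by simpa using R.add_mem h1 h3, ?_⟩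
    simp [h2, h4, smul_add]
  zero_mem' := ⟨0, R.zero_mem, by simp⟩
  smul_mem' := by
    rintro a p ⟨f, h1, h2⟩
    refine ⟨a • f, by simpa using R.smul_mem a h1, ?_⟩
    rw [Prod.smul_snd, h2, smul_comm]

/-- The relation `H + x = {{f, f' + x f} : {f, f'} ∈ H}`. -/
def relAddScalar (R : Submodule ℂ (E × E)) (x : ℝ) : Submodule ℂ (E × E) where
  carrier := {p | ∃ f', (p.1, f') ∈ R ∧ p.2 = f' + (x : ℂ) • p.1}
  add_mem' := by
    rintro p q ⟨f, h1, h2⟩ ⟨g, h3, h4⟩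
    refine ⟨f + g, by simpa using R.add_mem h1 h3, ?_⟩
    simp only [Prod.fst_add, Prod.snd_add, h2, h4, smul_add]
    abel
  zero_mem' := ⟨0, R.zero_mem, by simp⟩
  smul_mem' := by
    rintro a p ⟨f, h1, h2⟩
    refine ⟨a • f, by simpa using R.smul_mem a h1, ?_⟩
    rw [Prod.smul_snd, Prod.smul_fst, h2, smul_add, smul_comm]

end Basic

section Hilbert

variable [NormedAddCommGroup E] [InnerProductSpace ℂ E]
  [NormedAddCommGroup F] [InnerProductSpace ℂ F]
  [NormedAddCommGroup G] [InnerProductSpace ℂ G]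

/-- The graph of a bounded everywhere defined operator, as a linear relation. -/
def graphRel (W : E →L[ℂ] F) : Submodule ℂ (E × F) :=
  LinearMap.graph (W : E →ₗ[ℂ] F)

/-- The adjoint of a linear relation:
`H* = {{k, k'} : ⟨f', k⟩ = ⟨f, k'⟩ for all {f, f'} ∈ H}`. -/
def relAdj (R : Submodule ℂ (E × F)) : Submodule ℂ (F × E) where
  carrier := {q | ∀ p ∈ R, (inner ℂ p.2 q.1 : ℂ) = inner ℂ p.1 q.2}
  add_mem' := by
    intro a b ha hb p hp
    simp only [Prod.fst_add, Prod.snd_add, inner_add_right]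
    rw [ha p hp, hb p hp]
  zero_mem' := by intro p hp; simp
  smul_mem' := by
    intro c q hq p hp
    simp only [Prod.smul_fst, Prod.smul_snd, inner_smul_right]
    rw [hq p hp]

/-- A linear relation in a Hilbert space is nonnegative if `⟨h', h⟩ ≥ 0`
for all `{h, h'}` in the relation. -/
def relNonneg (R : Submodule ℂ (E × E)) : Prop :=
  ∀ p ∈ R, 0 ≤ (inner ℂ p.2 p.1 : ℂ)

/-- A linear relation in a Hilbert space is selfadjoint if `H = H*`. -/
def relSelfAdj (R : Submodule ℂ (E × E)) : Prop := relAdj R = R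

/-- The operator part `Hₛ = {{f, P f'} : {f, f'} ∈ H}` of a linear relation,
where `P` is the orthogonal projection onto `(mul H)ᗮ`. -/
def opPart [CompleteSpace F] (R : Submodule ℂ (E × F)) : Submodule ℂ (E × F) where
  carrier := {p | ∃ f' : F, (p.1, f') ∈ R ∧
      p.2 = (Submodule.orthogonalProjectionOnto (relMul R)ᗮ f' : F)}
  add_mem' := by
    rintro p q ⟨f, h1, h2⟩ ⟨g, h3, h4⟩
    refine ⟨f + g, by simpa using R.add_mem h1 h3, ?_⟩
    simp [h2, h4]
  zero_mem' := ⟨0, R.zero_mem, by simp⟩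
  smul_mem' := by
    rintro c p ⟨f, h1, h2⟩
    refine ⟨c • f, by simpa using R.smul_mem c h1, ?_⟩
    simp [h2]

/-- The ordering of nonnegative selfadjoint relations: `H₁ ≤ H₂` iff, with `Kᵢ`
the (unique) nonnegative selfadjoint square root of `Hᵢ`, one has
`dom K₂ ⊆ dom K₁` and `‖(K₁)ₛ h‖ ≤ ‖(K₂)ₛ h‖` for all `h ∈ dom K₂`. -/
def RelLE [CompleteSpace E] (H₁ H₂ : Submodule ℂ (E × E)) : Prop :=
  ∃ K₁ K₂ : Submodule ℂ (E × E),
    relNonneg K₁ ∧ relSelfAdj K₁ ∧ relComp K₁ K₁ = H₁ ∧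
    relNonneg K₂ ∧ relSelfAdj K₂ ∧ relComp K₂ K₂ = H₂ ∧
    relDom K₂ ⊆ relDom K₁ ∧
    ∀ h k₁ k₂, (h, k₁) ∈ opPart K₁ → (h, k₂) ∈ opPart K₂ → ‖k₁‖ ≤ ‖k₂‖

end Hilbert

open scoped InnerProductSpace
open Filter Topology

section Relations

variable [NormedAddCommGroup E] [InnerProductSpace ℂ E]
  [NormedAddCommGroup F] [InnerProductSpace ℂ F]

lemma mem_relDom {R : Submodule ℂ (E × F)} {x : E} : x ∈ relDom R ↔ ∃ y, (x, y) ∈ R :=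
  ⟨by rintro ⟨⟨_, y⟩, hy, rfl⟩; exact ⟨y, hy⟩, fun ⟨y, hy⟩ => ⟨(x, y), hy, rfl⟩⟩

lemma mem_relMul {R : Submodule ℂ (E × F)} {g : F} : g ∈ relMul R ↔ ((0 : E), g) ∈ R :=
  Iff.rfl

lemma inner_eq_of_mem_relAdj {R : Submodule ℂ (E × F)} {f : E} {f' : F} {k : F} {k' : E}
    (hp : (f, f') ∈ R) (hq : (k, k') ∈ relAdj R) : ⟪f', k⟫_ℂ = ⟪f, k'⟫_ℂ :=
  hq (f, f') hp

lemma isClosed_relAdj (R : Submodule ℂ (E × F)) : IsClosed (relAdj R : Set (F × E)) := by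
  have : (relAdj R : Set (F × E)) = ⋂ p ∈ (R : Set (E × F)), {q | ⟪p.2, q.1⟫_ℂ = ⟪p.1, q.2⟫_ℂ} := by
    ext; simp only [Set.mem_iInter]; rfl
  rw [this]
  exact isClosed_biInter fun p _ => isClosed_eq (by fun_prop) (by fun_prop)

lemma relSelfAdj.isClosed {R : Submodule ℂ (E × E)} (hR : relSelfAdj R) :
    IsClosed (R : Set (E × E)) :=
  hR ▸ isClosed_relAdj R

lemma isClosed_relMul {R : Submodule ℂ (E × F)} (hR : IsClosed (R : Set (E × F))) :
    IsClosed (relMul R : Set F) :=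
  hR.preimage (f := fun g : F => ((0 : E), g)) (by fun_prop)

lemma eq_zero_of_mem_of_mem_relAdj {R : Submodule ℂ (E × F)} {f : E} {g : F}
    (hR : (f, g) ∈ R) (hRadj : (g, -f) ∈ relAdj R) : f = 0 ∧ g = 0 := by
  have h := inner_eq_of_mem_relAdj hR hRadj
  rw [inner_neg_right, inner_self_eq_norm_sq_to_K, inner_self_eq_norm_sq_to_K] at h
  norm_cast at h
  constructor <;> apply norm_eq_zero.mp <;> nlinarith [norm_nonneg f, norm_nonneg g]

end Relations

section OperatorPart

variable [NormedAddCommGroup E] [InnerProductSpace ℂ E]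
  [NormedAddCommGroup F] [InnerProductSpace ℂ F] [CompleteSpace F] {R : Submodule ℂ (E × F)}

lemma mem_opPart_of_mem {f : E} {g : F} (h : (f, g) ∈ R) :
    (f, (relMul R)ᗮ.starProjection g) ∈ opPart R :=
  ⟨g, h, rfl⟩

lemma mem_relDom_of_mem_opPart {f : E} {k : F} (h : (f, k) ∈ opPart R) : f ∈ relDom R :=
  let ⟨g, hg, _⟩ := h
  mem_relDom.mpr ⟨g, hg⟩

lemma exists_mem_opPart {f : E} (h : f ∈ relDom R) : ∃ k, (f, k) ∈ opPart R :=
  let ⟨_, hg⟩ := mem_relDom.mp h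
  ⟨_, mem_opPart_of_mem hg⟩

lemma mem_opPart_iff (hR : IsClosed (R : Set (E × F))) {f : E} {k : F} :
    (f, k) ∈ opPart R ↔ (f, k) ∈ R ∧ k ∈ (relMul R)ᗮ := by
  constructor
  · rintro ⟨g, hg, rfl⟩
    have : CompleteSpace (relMul R) := (isClosed_relMul hR).completeSpace_coe
    have hmul : g - (relMul R)ᗮ.starProjection g ∈ relMul R := by
      simpa only [Submodule.orthogonal_orthogonal] using
        Submodule.sub_starProjection_mem_orthogonal (K := (relMul R)ᗮ) g
    refine ⟨?_, Submodule.starProjection_apply_mem _ g⟩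
    simpa using R.sub_mem hg (mem_relMul.mp hmul)
  · rintro ⟨hk, hperp⟩
    simpa [Submodule.starProjection_eq_self_iff.mpr hperp] using mem_opPart_of_mem hk

lemma eq_of_mem_opPart (hR : IsClosed (R : Set (E × F))) {f : E} {k k' : F}
    (h : (f, k) ∈ opPart R) (h' : (f, k') ∈ opPart R) : k = k' := by
  rw [mem_opPart_iff hR] at h h'
  have hmul : k - k' ∈ relMul R := mem_relMul.mpr (by simpa using R.sub_mem h.1 h'.1)
  exact sub_eq_zero.mp <| (Submodule.orthogonal_disjoint _).le_bot
    ⟨hmul, (relMul R)ᗮ.sub_mem h.2 h'.2⟩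

end OperatorPart

section PairRelation

variable {H : Type*} [NormedAddCommGroup H] [InnerProductSpace ℂ H] {X Y : H →L[ℂ] H}

def pairRel (X Y : H →L[ℂ] H) : Submodule ℂ (H × H) :=
  LinearMap.range ((X : H →ₗ[ℂ] H).prod Y)

lemma mem_pairRel {p : H × H} : p ∈ pairRel X Y ↔ ∃ u, (X u, Y u) = p :=
  Iff.rfl

lemma mk_mem_pairRel (u : H) : (X u, Y u) ∈ pairRel X Y :=
  ⟨u, rfl⟩

lemma mem_pairRel_iff (hXY : Commute X Y) (hsum : X * X + Y * Y = 1) {p : H × H} :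
    p ∈ pairRel X Y ↔ Y p.1 = X p.2 := by
  have hs : ∀ x, X (X x) + Y (Y x) = x := fun x => by simpa using congr($hsum x)
  have hc : ∀ x, X (Y x) = Y (X x) := fun x => congr($hXY.eq x)
  constructor
  · rintro ⟨u, rfl⟩
    exact (hc u).symm
  · intro h
    refine mem_pairRel.mpr ⟨X p.1 + Y p.2, Prod.ext ?_ ?_⟩
    · show X (X p.1 + Y p.2) = p.1
      rw [map_add, hc, ← h, hs]
    · show Y (X p.1 + Y p.2) = p.2
      rw [map_add, ← hc, h, hs]

lemma relComp_pairRel_self (hXY : Commute X Y) (hsum : X * X + Y * Y = 1) :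
    relComp (pairRel X Y) (pairRel X Y) = pairRel (X * X) (Y * Y) := by
  have hs : ∀ x, X (X x) + Y (Y x) = x := fun x => by simpa using congr($hsum x)
  have hc : ∀ x, X (Y x) = Y (X x) := fun x => congr($hXY.eq x)
  ext ⟨p₁, p₂⟩
  constructor
  · rintro ⟨φ, h₁, h₂⟩
    obtain ⟨u, hu⟩ := mem_pairRel.mp h₁
    obtain ⟨v, hv⟩ := mem_pairRel.mp h₂
    simp only [Prod.mk.injEq] at hu hv
    obtain ⟨rfl, rfl⟩ := hu
    obtain ⟨hφ, rfl⟩ := hv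
    refine mem_pairRel.mpr ⟨X u + Y v, Prod.ext ?_ ?_⟩
    · show X (X (X u + Y v)) = X u
      rw [map_add, map_add, hc v, hφ, ← map_add, hs]
    · show Y (Y (X u + Y v)) = Y v
      rw [map_add, map_add, ← hc u, ← hφ, ← map_add, hs]
  · intro hp
    obtain ⟨w, hw⟩ := mem_pairRel.mp hp
    simp only [mul_apply_eq_comp, Prod.mk.injEq] at hw
    obtain ⟨rfl, rfl⟩ := hw
    exact ⟨Y (X w), mk_mem_pairRel (X w), hc w ▸ mk_mem_pairRel (Y w)⟩

variable [CompleteSpace H]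

lemma relAdj_pairRel (hX : IsSelfAdjoint X) (hY : IsSelfAdjoint Y) (hXY : Commute X Y)
    (hsum : X * X + Y * Y = 1) : relAdj (pairRel X Y) = pairRel X Y := by
  have hXs : ∀ x y, ⟪X x, y⟫_ℂ = ⟪x, X y⟫_ℂ := hX.isSymmetric
  have hYs : ∀ x y, ⟪Y x, y⟫_ℂ = ⟪x, Y y⟫_ℂ := hY.isSymmetric
  ext ⟨q₁, q₂⟩
  rw [mem_pairRel_iff hXY hsum]
  constructor
  · intro hq
    refine ext_inner_left ℂ fun u => ?_
    rw [← hYs, ← hXs]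
    exact hq (X u, Y u) (mk_mem_pairRel u)
  · intro hq p hp
    obtain ⟨v, rfl⟩ := mem_pairRel.mp hp
    change ⟪Y v, q₁⟫_ℂ = ⟪X v, q₂⟫_ℂ
    rw [hYs, hXs]
    exact congrArg _ hq

lemma relNonneg_pairRel (hX : IsSelfAdjoint X) (hXY : 0 ≤ X * Y) : relNonneg (pairRel X Y) := by
  intro p hp
  obtain ⟨u, rfl⟩ := mem_pairRel.mp hp
  have hXs : ∀ x y, ⟪X x, y⟫_ℂ = ⟪x, X y⟫_ℂ := hX.isSymmetric
  change 0 ≤ ⟪Y u, X u⟫_ℂ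
  rw [← hXs]
  exact ((ContinuousLinearMap.nonneg_iff_isPositive _).mp hXY).inner_nonneg_left u

end PairRelation

section Resolvent

variable {H K : Type*} [NormedAddCommGroup H] [InnerProductSpace ℂ H]
  [NormedAddCommGroup K] [InnerProductSpace ℂ K]
  {S : Submodule ℂ (H × K)} {C : H →L[ℂ] H} {B : H →L[ℂ] K}

/-- Von Neumann's operators `C = (1 + S*S)⁻¹` and `B = S (1 + S*S)⁻¹` of a closed relation `S`. -/
structure IsResolventPair (S : Submodule ℂ (H × K)) (C : H →L[ℂ] H) (B : H →L[ℂ] K) : Prop where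
  mem (h : H) : (C h, B h) ∈ S
  mem_relAdj (h : H) : (B h, h - C h) ∈ relAdj S

namespace IsResolventPair

variable (hCB : IsResolventPair S C B)
include hCB

lemma inner_apply_right (x y : H) : ⟪B x, B y⟫_ℂ = ⟪C x, y - C y⟫_ℂ :=
  inner_eq_of_mem_relAdj (hCB.mem x) (hCB.mem_relAdj y)

lemma relComp_relAdj_eq : relComp (relAdj S) S = pairRel C (1 - C) := by
  ext ⟨p₁, p₂⟩
  constructor
  · rintro ⟨φ, h₁, h₂⟩
    have hS : (p₁ - C (p₁ + p₂), φ - B (p₁ + p₂)) ∈ S := by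
      simpa using S.sub_mem h₁ (hCB.mem (p₁ + p₂))
    have hSadj : (φ - B (p₁ + p₂), -(p₁ - C (p₁ + p₂))) ∈ relAdj S := by
      have := (relAdj S).sub_mem h₂ (hCB.mem_relAdj (p₁ + p₂))
      rwa [Prod.mk_sub_mk, show p₂ - (p₁ + p₂ - C (p₁ + p₂)) = -(p₁ - C (p₁ + p₂)) by abel] at this
    have hp₁ := sub_eq_zero.mp (eq_zero_of_mem_of_mem_relAdj hS hSadj).1
    refine mem_pairRel.mpr ⟨p₁ + p₂, ?_⟩
    simp [← hp₁]
  · rintro ⟨h, hp⟩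
    obtain ⟨rfl, rfl⟩ := Prod.mk.inj hp
    exact ⟨B h, hCB.mem h, by simpa using hCB.mem_relAdj h⟩

lemma inner_apply_left (x y : H) : ⟪C x, y⟫_ℂ = ⟪C x, C y⟫_ℂ + ⟪B x, B y⟫_ℂ := by
  rw [hCB.inner_apply_right, ← inner_add_right, add_sub_cancel]

lemma apply_mem_orthogonal_relMul (h : H) : B h ∈ (relMul S)ᗮ := by
  refine (Submodule.mem_orthogonal _ _).mpr fun b hb => ?_
  rw [inner_eq_of_mem_relAdj (mem_relMul.mp hb) (hCB.mem_relAdj h), inner_zero_left]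

lemma fst_eq_zero_of_inner_eq_zero {a : H} {b : K} (hab : (a, b) ∈ S)
    (horth : ∀ h, ⟪C h, a⟫_ℂ + ⟪B h, b⟫_ℂ = 0) : a = 0 := by
  have hpair (h : H) : ⟪B h, b⟫_ℂ = ⟪h - C h, a⟫_ℂ := by
    rw [← inner_conj_symm, inner_eq_of_mem_relAdj hab (hCB.mem_relAdj h), inner_conj_symm]
  have := horth a
  rw [hpair, inner_sub_left, add_sub_cancel] at this
  exact inner_self_eq_zero.mp this

lemma isPositive : C.IsPositive := by
  refine (ContinuousLinearMap.isPositive_iff C).mpr ⟨fun x y => ?_, fun x => ?_⟩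
  · change ⟪C x, y⟫_ℂ = ⟪x, C y⟫_ℂ
    rw [hCB.inner_apply_left x y, ← inner_conj_symm x, hCB.inner_apply_left y x, map_add,
      inner_conj_symm, inner_conj_symm]
  · rw [hCB.inner_apply_left, inner_self_eq_norm_sq_to_K, inner_self_eq_norm_sq_to_K]
    exact_mod_cast by positivity

lemma isPositive_one_sub : (1 - C).IsPositive := by
  have hsub (x : H) : (1 - C) x = x - C x := rfl
  refine (ContinuousLinearMap.isPositive_iff _).mpr ⟨fun x y => ?_, fun x => ?_⟩
  · change ⟪(1 - C) x, y⟫_ℂ = ⟪x, (1 - C) y⟫_ℂ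
    rw [hsub, hsub, inner_sub_left, inner_sub_right]
    exact congrArg _ (hCB.isPositive.isSymmetric x y)
  · have hB : ⟪x - C x, C x⟫_ℂ = ⟪B x, B x⟫_ℂ := by
      rw [← inner_conj_symm, ← hCB.inner_apply_right, inner_conj_symm]
    rw [hsub, ← sub_add_cancel x (C x), inner_add_right, sub_add_cancel, hB,
      inner_self_eq_norm_sq_to_K, inner_self_eq_norm_sq_to_K]
    exact_mod_cast by positivity

end IsResolventPair

variable {K₁ K₂ : Type*} [NormedAddCommGroup K₁] [InnerProductSpace ℂ K₁]
  [NormedAddCommGroup K₂] [InnerProductSpace ℂ K₂]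
  {S₁ : Submodule ℂ (H × K₁)} {S₂ : Submodule ℂ (H × K₂)}

lemma IsResolventPair.norm_apply_eq {B₁ : H →L[ℂ] K₁} {B₂ : H →L[ℂ] K₂}
    (h₁ : IsResolventPair S₁ C B₁) (h₂ : IsResolventPair S₂ C B₂) (x : H) : ‖B₁ x‖ = ‖B₂ x‖ := by
  have h := (h₁.inner_apply_right x x).trans (h₂.inner_apply_right x x).symm
  rw [inner_self_eq_norm_sq_to_K, inner_self_eq_norm_sq_to_K] at h
  exact (pow_left_inj₀ (norm_nonneg _) (norm_nonneg _) two_ne_zero).mp (by exact_mod_cast h)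

lemma IsResolventPair.eq_of_relComp_relAdj_eq {C₁ C₂ : H →L[ℂ] H} {B₁ : H →L[ℂ] K₁}
    {B₂ : H →L[ℂ] K₂} (h₁ : IsResolventPair S₁ C₁ B₁) (h₂ : IsResolventPair S₂ C₂ B₂)
    (hA : relComp (relAdj S₁) S₁ = relComp (relAdj S₂) S₂) : C₁ = C₂ := by
  rw [h₁.relComp_relAdj_eq, h₂.relComp_relAdj_eq] at hA
  ext h
  have hmem : (C₁ h, (1 - C₁) h) ∈ pairRel C₂ (1 - C₂) := hA ▸ mk_mem_pairRel h
  obtain ⟨u, hu⟩ := mem_pairRel.mp hmem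
  obtain ⟨hC, hu⟩ := Prod.mk.inj hu
  have : u = h := by simpa [hC] using hu
  rw [← hC, this]

end Resolvent

section VonNeumann

variable {H K : Type*} [NormedAddCommGroup H] [InnerProductSpace ℂ H] [CompleteSpace H]
  [NormedAddCommGroup K] [InnerProductSpace ℂ K] [CompleteSpace K]
  {S : Submodule ℂ (H × K)}

/-- `(C h, B h)` is the orthogonal projection of `(h, 0)` onto `S` in `H ⊕ K`. -/
lemma exists_isResolventPair (hS : IsClosed (S : Set (H × K))) :
    ∃ C B, IsResolventPair S C B := by
  let e := WithLp.prodContinuousLinearEquiv 2 ℂ H K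
  let S' := S.comap (e : WithLp 2 (H × K) →ₗ[ℂ] H × K)
  have : CompleteSpace S' := (hS.preimage e.continuous).completeSpace_coe
  let Q : H →L[ℂ] H × K := (e : WithLp 2 (H × K) →L[ℂ] H × K).comp
    (S'.starProjection.comp ((e.symm : H × K →L[ℂ] WithLp 2 (H × K)).comp
      (ContinuousLinearMap.inl ℂ H K)))
  refine ⟨(ContinuousLinearMap.fst ℂ H K).comp Q, (ContinuousLinearMap.snd ℂ H K).comp Q,
    fun h => S'.starProjection_apply_mem _, fun h p hp => ?_⟩
  have horth := Submodule.sub_starProjection_mem_orthogonal (K := S') (e.symm (h, 0))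
  have := (Submodule.mem_orthogonal S' _).mp horth (e.symm p) (by simpa [S'] using hp)
  simp only [WithLp.prod_inner_apply, inner_sub_right] at this
  simp only [WithLp.prodContinuousLinearEquiv_symm_apply, WithLp.prodContinuousLinearEquiv_apply,
    ContinuousLinearMap.comp_apply, ContinuousLinearMap.inl_apply, ContinuousLinearEquiv.coe_coe,
    ContinuousLinearMap.coe_fst', ContinuousLinearMap.coe_snd', WithLp.ofLp_fst, WithLp.ofLp_snd,
    inner_zero_right, add_zero, inner_sub_right, e, Q] at this ⊢
  linear_combination -this

lemma IsResolventPair.mem_closure_range {C : H →L[ℂ] H} {B : H →L[ℂ] K}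
    (hCB : IsResolventPair S C B) (hS : IsClosed (S : Set (H × K))) {x : H} {y : K}
    (hxy : (x, y) ∈ S) (hy : y ∈ (relMul S)ᗮ) :
    (x, y) ∈ closure (Set.range fun h => (C h, B h)) := by
  let e := WithLp.prodContinuousLinearEquiv 2 ℂ H K
  let S' := S.comap (e : WithLp 2 (H × K) →ₗ[ℂ] H × K)
  have : CompleteSpace S' := (hS.preimage e.continuous).completeSpace_coe
  let V : Submodule ℂ (WithLp 2 (H × K)) :=
    LinearMap.range (((e.symm : H × K →L[ℂ] WithLp 2 (H × K)).comp (C.prod B)) :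
      H →ₗ[ℂ] WithLp 2 (H × K))
  have hVS : V ≤ S' := by
    rintro _ ⟨h, rfl⟩
    simpa [S', e] using hCB.mem h
  -- an element of `S'` orthogonal to `V` is of the form `(0, b)` with `b ∈ mul S`
  have hperp (s : WithLp 2 (H × K)) (hs : s ∈ S') (hsV : s ∈ Vᗮ) :
      ⟪s, e.symm (x, y)⟫_ℂ = 0 := by
    have hs' : (s.fst, s.snd) ∈ S := hs
    have ha : s.fst = 0 := hCB.fst_eq_zero_of_inner_eq_zero hs' fun h => by
      simpa [e, V, WithLp.prod_inner_apply] using (Submodule.mem_orthogonal V s).mp hsV _ ⟨h, rfl⟩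
    have hb : s.snd ∈ relMul S := mem_relMul.mpr (ha ▸ hs')
    simp [WithLp.prod_inner_apply, e, ha, (Submodule.mem_orthogonal _ _).mp hy _ hb]
  have hmem : e.symm (x, y) ∈ V.topologicalClosure := by
    rw [← Submodule.orthogonal_orthogonal_eq_closure, Submodule.mem_orthogonal]
    intro z hz
    have hr := Submodule.sub_starProjection_mem_orthogonal (K := S') z
    have hs : S'.starProjection z ∈ Vᗮ := by
      simpa using Vᗮ.sub_mem hz (Submodule.orthogonal_le hVS hr)
    rw [← sub_add_cancel z (S'.starProjection z), inner_add_left,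
      hperp _ (S'.starProjection_apply_mem z) hs,
      Submodule.inner_left_of_mem_orthogonal (by simpa [S', e] using hxy) hr, add_zero]
  simpa [e] using map_mem_closure e.continuous hmem (by rintro _ ⟨h, rfl⟩; exact ⟨h, by simp [e]⟩)

end VonNeumann

lemma exists_tendsto_norm_eq {M F₁ F₂ : Type*} [AddCommGroup M] [NormedAddCommGroup F₁]
    [CompleteSpace F₁] [SeminormedAddCommGroup F₂] (L₁ : M →+ F₁) (L₂ : M →+ F₂)
    (hL : ∀ x, ‖L₁ x‖ = ‖L₂ x‖) {u : ℕ → M} {y : F₂}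
    (hu : Tendsto (fun n => L₂ (u n)) atTop (𝓝 y)) :
    ∃ z, Tendsto (fun n => L₁ (u n)) atTop (𝓝 z) ∧ ‖z‖ = ‖y‖ := by
  have hdist (m n : ℕ) : dist (L₁ (u m)) (L₁ (u n)) = dist (L₂ (u m)) (L₂ (u n)) := by
    rw [dist_eq_norm, dist_eq_norm, ← map_sub, ← map_sub, hL]
  have hCauchy : CauchySeq fun n => L₁ (u n) := Metric.cauchySeq_iff.mpr fun ε hε => by
    simpa only [hdist] using Metric.cauchySeq_iff.mp hu.cauchySeq ε hε
  obtain ⟨z, hz⟩ := cauchySeq_tendsto_of_complete hCauchy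
  exact ⟨z, hz, tendsto_nhds_unique hz.norm (by simpa only [hL] using hu.norm)⟩

section SameProduct

variable {H K₁ K₂ : Type*} [NormedAddCommGroup H] [InnerProductSpace ℂ H] [CompleteSpace H]
  [NormedAddCommGroup K₁] [InnerProductSpace ℂ K₁] [CompleteSpace K₁]
  [NormedAddCommGroup K₂] [InnerProductSpace ℂ K₂] [CompleteSpace K₂]
  {S₁ : Submodule ℂ (H × K₁)} {S₂ : Submodule ℂ (H × K₂)}

lemma exists_mem_opPart_norm_eq_of_relComp_eq (hS₁ : IsClosed (S₁ : Set (H × K₁)))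
    (hS₂ : IsClosed (S₂ : Set (H × K₂))) (hA : relComp (relAdj S₁) S₁ = relComp (relAdj S₂) S₂)
    {x : H} {y : K₂} (hxy : (x, y) ∈ opPart S₂) : ∃ z, (x, z) ∈ opPart S₁ ∧ ‖z‖ = ‖y‖ := by
  obtain ⟨C, B₁, h₁⟩ := exists_isResolventPair hS₁
  obtain ⟨C₂, B₂, h₂⟩ := exists_isResolventPair hS₂
  obtain rfl := h₁.eq_of_relComp_relAdj_eq h₂ hA
  rw [mem_opPart_iff hS₂] at hxy
  obtain ⟨v, hv, hlim⟩ := mem_closure_iff_seq_limit.mp (h₂.mem_closure_range hS₂ hxy.1 hxy.2)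
  choose u hu using hv
  obtain rfl : (fun n => (C (u n), B₂ (u n))) = v := funext hu
  obtain ⟨z, hz, hnorm⟩ := exists_tendsto_norm_eq (B₁ : H →+ K₁) (B₂ : H →+ K₂)
    (h₁.norm_apply_eq h₂) ((continuous_snd.tendsto _).comp hlim)
  have hC : Tendsto (fun n => C (u n)) atTop (𝓝 x) := (continuous_fst.tendsto _).comp hlim
  refine ⟨z, (mem_opPart_iff hS₁).mpr ⟨?_, ?_⟩, hnorm⟩
  · exact hS₁.mem_of_tendsto (hC.prodMk_nhds hz) (Eventually.of_forall fun n => h₁.mem (u n))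
  · exact (Submodule.isClosed_orthogonal _).mem_of_tendsto hz
      (Eventually.of_forall fun n => h₁.apply_mem_orthogonal_relMul (u n))

end SameProduct

section OrderTransfer

variable {H K₁ K₂ L₁ L₂ : Type*} [NormedAddCommGroup H] [InnerProductSpace ℂ H] [CompleteSpace H]
  [NormedAddCommGroup K₁] [InnerProductSpace ℂ K₁] [CompleteSpace K₁]
  [NormedAddCommGroup K₂] [InnerProductSpace ℂ K₂] [CompleteSpace K₂]
  [NormedAddCommGroup L₁] [InnerProductSpace ℂ L₁] [CompleteSpace L₁]
  [NormedAddCommGroup L₂] [InnerProductSpace ℂ L₂] [CompleteSpace L₂]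

lemma relDom_subset_of_relComp_eq {S₁ : Submodule ℂ (H × K₁)} {S₂ : Submodule ℂ (H × K₂)}
    (hS₁ : IsClosed (S₁ : Set (H × K₁))) (hS₂ : IsClosed (S₂ : Set (H × K₂)))
    (hA : relComp (relAdj S₁) S₁ = relComp (relAdj S₂) S₂) : relDom S₂ ⊆ relDom S₁ := by
  intro x hx
  obtain ⟨y, hy⟩ := exists_mem_opPart hx
  obtain ⟨z, hz, -⟩ := exists_mem_opPart_norm_eq_of_relComp_eq hS₁ hS₂ hA hy
  exact mem_relDom_of_mem_opPart hz

lemma norm_eq_of_relComp_eq {S₁ : Submodule ℂ (H × K₁)} {S₂ : Submodule ℂ (H × K₂)}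
    (hS₁ : IsClosed (S₁ : Set (H × K₁))) (hS₂ : IsClosed (S₂ : Set (H × K₂)))
    (hA : relComp (relAdj S₁) S₁ = relComp (relAdj S₂) S₂) {x : H} {k₁ : K₁} {k₂ : K₂}
    (h₁ : (x, k₁) ∈ opPart S₁) (h₂ : (x, k₂) ∈ opPart S₂) : ‖k₁‖ = ‖k₂‖ := by
  obtain ⟨z, hz, hnorm⟩ := exists_mem_opPart_norm_eq_of_relComp_eq hS₁ hS₂ hA h₂
  rwa [eq_of_mem_opPart hS₁ h₁ hz]

def OpPartLE (T₁ : Submodule ℂ (H × K₁)) (T₂ : Submodule ℂ (H × K₂)) : Prop :=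
  relDom T₂ ⊆ relDom T₁ ∧ ∀ h k₁ k₂, (h, k₁) ∈ opPart T₁ → (h, k₂) ∈ opPart T₂ → ‖k₁‖ ≤ ‖k₂‖

lemma OpPartLE.of_relComp_eq {S₁ : Submodule ℂ (H × K₁)} {S₂ : Submodule ℂ (H × K₂)}
    {T₁ : Submodule ℂ (H × L₁)} {T₂ : Submodule ℂ (H × L₂)}
    (hS₁ : IsClosed (S₁ : Set (H × K₁))) (hS₂ : IsClosed (S₂ : Set (H × K₂)))
    (hT₁ : IsClosed (T₁ : Set (H × L₁))) (hT₂ : IsClosed (T₂ : Set (H × L₂)))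
    (hA₁ : relComp (relAdj S₁) S₁ = relComp (relAdj T₁) T₁)
    (hA₂ : relComp (relAdj S₂) S₂ = relComp (relAdj T₂) T₂) (hle : OpPartLE S₁ S₂) :
    OpPartLE T₁ T₂ := by
  refine ⟨(relDom_subset_of_relComp_eq hS₂ hT₂ hA₂).trans <| hle.1.trans <|
    relDom_subset_of_relComp_eq hT₁ hS₁ hA₁.symm, fun h k₁ k₂ hk₁ hk₂ => ?_⟩
  have hh : h ∈ relDom S₂ := relDom_subset_of_relComp_eq hS₂ hT₂ hA₂ (mem_relDom_of_mem_opPart hk₂)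
  obtain ⟨j₂, hj₂⟩ := exists_mem_opPart hh
  obtain ⟨j₁, hj₁⟩ := exists_mem_opPart (hle.1 hh)
  calc ‖k₁‖ = ‖j₁‖ := norm_eq_of_relComp_eq hT₁ hS₁ hA₁.symm hk₁ hj₁
    _ ≤ ‖j₂‖ := hle.2 h j₁ j₂ hj₁ hj₂
    _ = ‖k₂‖ := norm_eq_of_relComp_eq hS₂ hT₂ hA₂ hj₂ hk₂

end OrderTransfer

section SquareRoot

variable {H K : Type*} [NormedAddCommGroup H] [InnerProductSpace ℂ H] [CompleteSpace H]
  [NormedAddCommGroup K] [InnerProductSpace ℂ K] [CompleteSpace K]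

lemma exists_sqrt_relComp_relAdj {S : Submodule ℂ (H × K)} (hS : IsClosed (S : Set (H × K))) :
    ∃ R : Submodule ℂ (H × H), relNonneg R ∧ relSelfAdj R ∧ relComp R R = relComp (relAdj S) S := by
  obtain ⟨C, B, hCB⟩ := exists_isResolventPair hS
  have hC : 0 ≤ C := (ContinuousLinearMap.nonneg_iff_isPositive C).mpr hCB.isPositive
  have hC' : 0 ≤ 1 - C := (ContinuousLinearMap.nonneg_iff_isPositive _).mpr hCB.isPositive_one_sub
  have hX := CFC.sqrt_nonneg C
  have hY := CFC.sqrt_nonneg (1 - C)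
  have hXY : Commute (CFC.sqrt C) (CFC.sqrt (1 - C)) := by
    rw [CFC.sqrt_eq_cfc, CFC.sqrt_eq_cfc]
    exact (((Commute.one_left C).sub_left (Commute.refl C)).cfc_nnreal _).symm.cfc_nnreal _
  have hsq : CFC.sqrt C * CFC.sqrt C = C := CFC.sqrt_mul_sqrt_self C hC
  have hsq' : CFC.sqrt (1 - C) * CFC.sqrt (1 - C) = 1 - C := CFC.sqrt_mul_sqrt_self _ hC'
  have hsum : CFC.sqrt C * CFC.sqrt C + CFC.sqrt (1 - C) * CFC.sqrt (1 - C) = 1 := by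
    rw [hsq, hsq', add_sub_cancel]
  refine ⟨pairRel (CFC.sqrt C) (CFC.sqrt (1 - C)),
    relNonneg_pairRel hX.isSelfAdjoint (hXY.mul_nonneg hX hY),
    relAdj_pairRel hX.isSelfAdjoint hY.isSelfAdjoint hXY hsum, ?_⟩
  rw [relComp_pairRel_self hXY hsum, hsq, hsq', hCB.relComp_relAdj_eq]

end SquareRoot

theorem stmt_5 {𝓗 𝓚₁ 𝓚₂ : Type*}
    [NormedAddCommGroup 𝓗] [InnerProductSpace ℂ 𝓗] [CompleteSpace 𝓗]
    [NormedAddCommGroup 𝓚₁] [InnerProductSpace ℂ 𝓚₁] [CompleteSpace 𝓚₁]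
    [NormedAddCommGroup 𝓚₂] [InnerProductSpace ℂ 𝓚₂] [CompleteSpace 𝓚₂]
    (T₁ : Submodule ℂ (𝓗 × 𝓚₁)) (T₂ : Submodule ℂ (𝓗 × 𝓚₂))
    (h₁ : IsClosed (T₁ : Set (𝓗 × 𝓚₁))) (h₂ : IsClosed (T₂ : Set (𝓗 × 𝓚₂))) :
    RelLE (relComp (relAdj T₁) T₁) (relComp (relAdj T₂) T₂) ↔
      relDom T₂ ⊆ relDom T₁ ∧
      ∀ h k₁ k₂, (h, k₁) ∈ opPart T₁ → (h, k₂) ∈ opPart T₂ → ‖k₁‖ ≤ ‖k₂‖ := by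
  change _ ↔ OpPartLE T₁ T₂
  constructor
  · rintro ⟨K₁, K₂, -, hK₁sa, hK₁T, -, hK₂sa, hK₂T, hK⟩
    exact OpPartLE.of_relComp_eq hK₁sa.isClosed hK₂sa.isClosed h₁ h₂
      (by rw [hK₁sa, hK₁T]) (by rw [hK₂sa, hK₂T]) hK
  · intro hT
    obtain ⟨K₁, hK₁nn, hK₁sa, hK₁T⟩ := exists_sqrt_relComp_relAdj h₁
    obtain ⟨K₂, hK₂nn, hK₂sa, hK₂T⟩ := exists_sqrt_relComp_relAdj h₂
    refine ⟨K₁, K₂, hK₁nn, hK₁sa, hK₁T, hK₂nn, hK₂sa, hK₂T,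
      hT.of_relComp_eq h₁ h₂ hK₁sa.isClosed hK₂sa.isClosed ?_ ?_⟩
    · rw [hK₁sa, hK₁T]
    · rw [hK₂sa, hK₂T]
end
end

section
/- Let ℌ_A, ℌ_B, and ℌ be Hilbert spaces, let A be a linear relation from ℌ_A to ℌ, and let B be a linear relation from ℌ_B to ℌ. Then ran A ⊆ ran B if and only if there exists a linear relation W from ℌ_A to ℌ_B such that A ⊆ BW. -/
open scoped ComplexOrder

set_option synthInstance.maxHeartbeats 1000000
set_option maxHeartbeats 1000000

noncomputable section

variable {E F G : Type*}

section Range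

variable [AddCommGroup E] [Module ℂ E] [AddCommGroup F] [Module ℂ F]
  [AddCommGroup G] [Module ℂ G]

theorem relRan_mono {R R' : Submodule ℂ (E × F)} (h : R ≤ R') : relRan R ⊆ relRan R' :=
  Set.image_mono h

theorem relRan_relComp_subset (S : Submodule ℂ (F × G)) (R : Submodule ℂ (E × F)) :
    relRan (relComp S R) ⊆ relRan S := by
  rintro _ ⟨⟨f, g⟩, ⟨φ, -, hS⟩, rfl⟩
  exact ⟨(φ, g), hS, rfl⟩

theorem le_relComp_relInv_relComp {A : Submodule ℂ (E × G)} {B : Submodule ℂ (F × G)}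
    (h : relRan A ⊆ relRan B) : A ≤ relComp B (relComp (relInv B) A) := by
  rintro ⟨f, f'⟩ hA
  obtain ⟨⟨g, g'⟩, hB, rfl⟩ := h ⟨(f, f'), hA, rfl⟩
  exact ⟨g, ⟨g', hA, hB⟩, hB⟩

end Range

theorem stmt_6_general {𝓗A 𝓗B 𝓗 : Type*}
    [NormedAddCommGroup 𝓗A] [InnerProductSpace ℂ 𝓗A]
    [NormedAddCommGroup 𝓗B] [InnerProductSpace ℂ 𝓗B]
    [NormedAddCommGroup 𝓗] [InnerProductSpace ℂ 𝓗]
    (A : Submodule ℂ (𝓗A × 𝓗)) (B : Submodule ℂ (𝓗B × 𝓗)) :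
    relRan A ⊆ relRan B ↔ ∃ W : Submodule ℂ (𝓗A × 𝓗B), A ≤ relComp B W :=
  ⟨fun h => ⟨relComp (relInv B) A, le_relComp_relInv_relComp h⟩,
    fun ⟨W, hW⟩ => (relRan_mono hW).trans (relRan_relComp_subset B W)⟩

theorem stmt_6 {𝓗A 𝓗B 𝓗 : Type*}
    [NormedAddCommGroup 𝓗A] [InnerProductSpace ℂ 𝓗A] [CompleteSpace 𝓗A]
    [NormedAddCommGroup 𝓗B] [InnerProductSpace ℂ 𝓗B] [CompleteSpace 𝓗B]
    [NormedAddCommGroup 𝓗] [InnerProductSpace ℂ 𝓗] [CompleteSpace 𝓗]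
    (A : Submodule ℂ (𝓗A × 𝓗)) (B : Submodule ℂ (𝓗B × 𝓗)) :
    relRan A ⊆ relRan B ↔ ∃ W : Submodule ℂ (𝓗A × 𝓗B), A ≤ relComp B W :=
  stmt_6_general A B
end
end
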